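/- arXiv:1406.5882 — 2 statements merged into one kernel-verified Lean document; each statement's English description precedes it below -/
import Mathlib

section
/- Let n ≥ 1, a < b, c ∈ [a, b], E ∈ ℝ, and let V : ℝ → Matrix (Fin n) (Fin n) ℝ be continuous with V(x) symmetric for all x. Let A₁, A₂, B₁, B₂ be real n×n matrices with A₁·A₂ᵀ = A₂·A₁ᵀ, B₁·B₂ᵀ = B₂·B₁ᵀ, and such that the only v ∈ ℝⁿ with A₁ᵀ·v = 0 and A₂ᵀ·v = 0 is v = 0, and the only v ∈ ℝⁿ with B₁ᵀ·v = 0 and B₂ᵀ·v = 0 is v = 0. Let Y_L, Y_R solve the matrix ODE Y'' = (V − E·I)Y with Y_L(a) = A₂ᵀ, Y_L'(a) = −A₁ᵀ, Y_R(b) = B₂ᵀ, Y_R'(b) = −B₁ᵀ, assume Y_L'(c) and Y_R'(c) are invertible, and set Ψ_L(c) = Y_L(c)·(Y_L'(c))⁻¹, Ψ_R(c) = Y_R(c)·(Y_R'(c))⁻¹. Then the linear map sending a solution y of the boundary value problem (i.e. a twice differentiable y with y'' = (V − E·I)·y on [a,b] satisfying both boundary conditions) to the vector y'(c) ∈ ℝⁿ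 is an injective linear map whose range is exactly the kernel of the matrix Ψ_L(c) − Ψ_R(c); in particular, the multiplicity of E (the dimension of the space of solutions of the boundary value problem) equals the dimension of the kernel of Ψ_L(c) − Ψ_R(c). -/
/-!
A solution satisfying the left boundary condition has Cauchy data `(y(a), y'(a)) = (A₂ᵀ v, -A₁ᵀ v)`
for some `v`: conjointness and the rank condition make these vectors the whole kernel of
`(u, w) ↦ A₁ u + A₂ w`, by a dimension count. Uniqueness for the linear ODE then gives `y = Y_L v`,
and reading off `v` at `c` gives `y = Y_L (Y_L'(c))⁻¹ y'(c)`. Hence `y'(c)` determines `y`, and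
`y(c) = Ψ_L(c) y'(c) = Ψ_R(c) y'(c)`. Conversely, for `w` in the kernel of `Ψ_L(c) - Ψ_R(c)` the
left and right solutions with derivative `w` at `c` have the same Cauchy data there, hence
coincide and solve the boundary value problem. So the solution space is the injective image of
that kernel.
-/

attribute [local instance] Matrix.normedAddCommGroup Matrix.normedSpace

open scoped Matrix
open Set

/-- `y` (with first derivative `y₁`) is a solution of the coupled-channel
boundary value problem on `[a,b]`. -/
def IsBVPSolution (n : ℕ) (a b E : ℝ) (V : ℝ → Matrix (Fin n) (Fin n) ℝ)
    (A₁ A₂ B₁ B₂ : Matrix (Fin n) (Fin n) ℝ) (y y₁ : ℝ → Fin n → ℝ) : Prop :=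
  (∀ x, HasDerivAt y (y₁ x) x) ∧
  (∀ x ∈ Icc a b,
    HasDerivAt y₁ ((V x - E • (1 : Matrix (Fin n) (Fin n) ℝ)).mulVec (y x)) x) ∧
  A₁.mulVec (y a) + A₂.mulVec (y₁ a) = 0 ∧
  B₁.mulVec (y b) + B₂.mulVec (y₁ b) = 0

open scoped NNReal
open Module

namespace Matrix

variable {K : Type*} [Field K] {m : Type*} [Fintype m]

theorem mulVec_add_mulVec_eq_zero {A₁ A₂ : Matrix m m K} (hA : A₁ * A₂ᵀ = A₂ * A₁ᵀ)
    (v : m → K) : A₁ *ᵥ (A₂ᵀ *ᵥ v) + A₂ *ᵥ (-A₁ᵀ *ᵥ v) = 0 := by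
  rw [neg_mulVec, mulVec_neg, mulVec_mulVec, mulVec_mulVec, hA, add_neg_cancel]

section Inverse

variable {R : Type*} [CommRing R] [DecidableEq m] {A : Matrix m m R}

theorem mulVec_nonsing_inv_mulVec (h : IsUnit A) (v : m → R) : A *ᵥ (A⁻¹ *ᵥ v) = v := by
  rw [mulVec_mulVec, mul_nonsing_inv _ ((isUnit_iff_isUnit_det _).mp h), one_mulVec]

theorem nonsing_inv_mulVec_mulVec (h : IsUnit A) (v : m → R) : A⁻¹ *ᵥ (A *ᵥ v) = v := by
  rw [mulVec_mulVec, nonsing_inv_mul _ ((isUnit_iff_isUnit_det _).mp h), one_mulVec]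

end Inverse

theorem mulVecLin_fromRows_injective {P Q : Matrix m m K}
    (h : ∀ v, P *ᵥ v = 0 → Q *ᵥ v = 0 → v = 0) :
    Function.Injective (fromRows P Q).mulVecLin := by
  rw [← LinearMap.ker_eq_bot, LinearMap.ker_eq_bot']
  intro v hv
  rw [mulVecLin_apply, fromRows_mulVec, ← Sum.elim_zero_zero, Sum.elim_eq_iff] at hv
  exact h v hv.1 hv.2

theorem ker_fromCols_eq_range_fromRows {A₁ A₂ : Matrix m m K} (hA : A₁ * A₂ᵀ = A₂ * A₁ᵀ)
    (hrank : ∀ v, A₁ᵀ *ᵥ v = 0 → A₂ᵀ *ᵥ v = 0 → v = 0) :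
    LinearMap.ker (fromCols A₁ A₂).mulVecLin = LinearMap.range (fromRows A₂ᵀ (-A₁ᵀ)).mulVecLin := by
  have hD := mulVecLin_fromRows_injective (P := A₂ᵀ) (Q := -A₁ᵀ) fun v h₂ h₁ =>
    hrank v (by rwa [neg_mulVec, neg_eq_zero] at h₁) h₂
  have hCt := mulVecLin_fromRows_injective hrank
  have hrankC : (fromCols A₁ A₂).rank = Fintype.card m := by
    rw [← rank_transpose, transpose_fromCols, rank, LinearMap.finrank_range_of_inj hCt,
      finrank_fintype_fun_eq_card]
  refine (Submodule.eq_of_le_of_finrank_eq ?_ ?_).symm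
  · rintro _ ⟨v, rfl⟩
    rw [LinearMap.mem_ker, mulVecLin_apply, mulVecLin_apply, fromRows_mulVec,
      fromCols_mulVec_sumElim]
    exact mulVec_add_mulVec_eq_zero hA v
  · have := LinearMap.finrank_range_add_finrank_ker (fromCols A₁ A₂).mulVecLin
    rw [← rank, hrankC] at this
    simp only [finrank_fintype_fun_eq_card, Fintype.card_sum] at this
    rw [LinearMap.finrank_range_of_inj hD, finrank_fintype_fun_eq_card]
    omega

theorem exists_eq_of_mulVec_add_mulVec_eq_zero {A₁ A₂ : Matrix m m K}
    (hA : A₁ * A₂ᵀ = A₂ * A₁ᵀ) (hrank : ∀ v, A₁ᵀ *ᵥ v = 0 → A₂ᵀ *ᵥ v = 0 → v = 0)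
    {u w : m → K} (h : A₁ *ᵥ u + A₂ *ᵥ w = 0) :
    ∃ v, u = A₂ᵀ *ᵥ v ∧ w = -A₁ᵀ *ᵥ v := by
  have hmem : Sum.elim u w ∈ LinearMap.ker (fromCols A₁ A₂).mulVecLin := by
    rwa [LinearMap.mem_ker, mulVecLin_apply, fromCols_mulVec_sumElim]
  obtain ⟨v, hv⟩ := ker_fromCols_eq_range_fromRows hA hrank ▸ hmem
  rw [mulVecLin_apply, fromRows_mulVec, Sum.elim_eq_iff] at hv
  exact ⟨v, hv.1.symm, hv.2.symm⟩

end Matrix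

section ODE

variable {F : Type*} [NormedAddCommGroup F] [NormedSpace ℝ F] {a b t₀ : ℝ}

theorem ODE_solution_unique_of_mem_Icc_of_lipschitzWith {v : ℝ → F → F} {K : ℝ≥0}
    {f g : ℝ → F} (hv : ∀ t ∈ Icc a b, LipschitzWith K (v t)) (ht₀ : t₀ ∈ Icc a b)
    (hf : ∀ t ∈ Icc a b, HasDerivAt f (v t (f t)) t)
    (hg : ∀ t ∈ Icc a b, HasDerivAt g (v t (g t)) t) (heq : f t₀ = g t₀) :
    EqOn f g (Icc a b) := by
  have hlip t (ht : t ∈ Icc a b) : LipschitzOnWith K (v t) univ := (hv t ht).lipschitzOnWith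
  have hfc := HasDerivAt.continuousOn hf
  have hgc := HasDerivAt.continuousOn hg
  have hleft : Ioc a t₀ ⊆ Icc a b := Ioc_subset_Icc_self.trans (Icc_subset_Icc_right ht₀.2)
  have hright : Ico t₀ b ⊆ Icc a b := Ico_subset_Icc_self.trans (Icc_subset_Icc_left ht₀.1)
  rw [← Icc_union_Icc_eq_Icc ht₀.1 ht₀.2]
  refine EqOn.union ?_ ?_
  · exact ODE_solution_unique_of_mem_Icc_left (fun t ht => hlip t (hleft ht))
      (hfc.mono (Icc_subset_Icc_right ht₀.2)) (fun t ht => (hf t (hleft ht)).hasDerivWithinAt)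
      (fun _ _ => mem_univ _)
      (hgc.mono (Icc_subset_Icc_right ht₀.2)) (fun t ht => (hg t (hleft ht)).hasDerivWithinAt)
      (fun _ _ => mem_univ _) heq
  · exact ODE_solution_unique_of_mem_Icc_right (fun t ht => hlip t (hright ht))
      (hfc.mono (Icc_subset_Icc_left ht₀.1)) (fun t ht => (hf t (hright ht)).hasDerivWithinAt)
      (fun _ _ => mem_univ _)
      (hgc.mono (Icc_subset_Icc_left ht₀.1)) (fun t ht => (hg t (hright ht)).hasDerivWithinAt)
      (fun _ _ => mem_univ _) heq

theorem eqOn_Icc_of_hasDerivAt_clm_apply {A : ℝ → F →L[ℝ] F} (hA : ContinuousOn A (Icc a b))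
    (ht₀ : t₀ ∈ Icc a b) {y y₁ z z₁ : ℝ → F}
    (hy : ∀ t ∈ Icc a b, HasDerivAt y (y₁ t) t) (hy₁ : ∀ t ∈ Icc a b, HasDerivAt y₁ (A t (y t)) t)
    (hz : ∀ t ∈ Icc a b, HasDerivAt z (z₁ t) t) (hz₁ : ∀ t ∈ Icc a b, HasDerivAt z₁ (A t (z t)) t)
    (h₀ : y t₀ = z t₀) (h₁ : y₁ t₀ = z₁ t₀) :
    EqOn y z (Icc a b) ∧ EqOn y₁ z₁ (Icc a b) := by
  obtain ⟨C, hC⟩ := isCompact_Icc.exists_bound_of_continuousOn hA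
  have hlip : ∀ t ∈ Icc a b,
      LipschitzWith (max 1 C.toNNReal) fun p : F × F => (p.2, A t p.1) := by
    intro t ht
    refine (LipschitzWith.prod_snd.prodMk ((A t).lipschitz.comp LipschitzWith.prod_fst)).weaken
      (max_le_max le_rfl ?_)
    rw [mul_one, ← NNReal.coe_le_coe, coe_nnnorm, Real.coe_toNNReal']
    exact (hC t ht).trans (le_max_left _ _)
  have h := ODE_solution_unique_of_mem_Icc_of_lipschitzWith hlip ht₀
    (fun t ht => (hy t ht).prodMk (hy₁ t ht)) (fun t ht => (hz t ht).prodMk (hz₁ t ht))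
    (Prod.ext h₀ h₁)
  exact ⟨fun t ht => congrArg Prod.fst (h ht), fun t ht => congrArg Prod.snd (h ht)⟩

end ODE

section MatrixODE

variable {m : Type*} [Fintype m] [DecidableEq m] {M : ℝ → Matrix m m ℝ} {s : Set ℝ}
  {a b : ℝ} {Y Y₁ : ℝ → Matrix m m ℝ}

theorem HasDerivAt.mulVec_const {Y' : Matrix m m ℝ} {x : ℝ} (hY : HasDerivAt Y Y' x)
    (v : m → ℝ) : HasDerivAt (fun t => Y t *ᵥ v) (Y' *ᵥ v) x :=
  let L : Matrix m m ℝ →L[ℝ] (m → ℝ) :=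
    LinearMap.toContinuousLinearMap ((LinearMap.applyₗ v).comp Matrix.toLin'.toLinearMap)
  L.hasFDerivAt.comp_hasDerivAt x hY

def IsSolutionOn (M : ℝ → Matrix m m ℝ) (s : Set ℝ) (y y₁ : ℝ → m → ℝ) : Prop :=
  ∀ t ∈ s, HasDerivAt y (y₁ t) t ∧ HasDerivAt y₁ (M t *ᵥ y t) t

theorem isSolutionOn_mulVec (hY : ∀ t ∈ s, HasDerivAt Y (Y₁ t) t)
    (hY₁ : ∀ t ∈ s, HasDerivAt Y₁ (M t * Y t) t) (v : m → ℝ) :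
    IsSolutionOn M s (fun t => Y t *ᵥ v) (fun t => Y₁ t *ᵥ v) := fun t ht =>
  ⟨(hY t ht).mulVec_const v, by simpa only [Matrix.mulVec_mulVec] using (hY₁ t ht).mulVec_const v⟩

theorem IsSolutionOn.eqOn {y y₁ z z₁ : ℝ → m → ℝ} {t₀ : ℝ} (hM : ContinuousOn M (Icc a b))
    (hy : IsSolutionOn M (Icc a b) y y₁) (hz : IsSolutionOn M (Icc a b) z z₁)
    (ht₀ : t₀ ∈ Icc a b) (h₀ : y t₀ = z t₀) (h₁ : y₁ t₀ = z₁ t₀) :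
    EqOn y z (Icc a b) ∧ EqOn y₁ z₁ (Icc a b) := by
  let toCLM : Matrix m m ℝ →ₗ[ℝ] (m → ℝ) →L[ℝ] (m → ℝ) :=
    LinearMap.toContinuousLinearMap.toLinearMap ∘ₗ Matrix.toLin'.toLinearMap
  exact eqOn_Icc_of_hasDerivAt_clm_apply (A := fun t => toCLM (M t))
    (toCLM.continuous_of_finiteDimensional.comp_continuousOn hM) ht₀
    (fun t ht => (hy t ht).1) (fun t ht => (hy t ht).2) (fun t ht => (hz t ht).1)
    (fun t ht => (hz t ht).2) h₀ h₁

/-- The boundary condition forces the Cauchy data at `p` to be `(A₂ᵀ v, -A₁ᵀ v)`, so `y = Y v`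
by uniqueness, and `v = (Y'(c))⁻¹ y'(c)`. -/
theorem IsSolutionOn.eqOn_mulVec_inv_mulVec {A₁ A₂ : Matrix m m ℝ} (hA : A₁ * A₂ᵀ = A₂ * A₁ᵀ)
    (hrank : ∀ v, A₁ᵀ *ᵥ v = 0 → A₂ᵀ *ᵥ v = 0 → v = 0) (hM : ContinuousOn M (Icc a b))
    (hY : ∀ t ∈ Icc a b, HasDerivAt Y (Y₁ t) t) (hY₁ : ∀ t ∈ Icc a b, HasDerivAt Y₁ (M t * Y t) t)
    {p c : ℝ} (hp : p ∈ Icc a b) (hYp : Y p = A₂ᵀ) (hY₁p : Y₁ p = -A₁ᵀ) (hc : c ∈ Icc a b)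
    (hYc : IsUnit (Y₁ c)) {y y₁ : ℝ → m → ℝ} (hy : IsSolutionOn M (Icc a b) y y₁)
    (hbc : A₁ *ᵥ y p + A₂ *ᵥ y₁ p = 0) :
    EqOn y (fun t => Y t *ᵥ ((Y₁ c)⁻¹ *ᵥ y₁ c)) (Icc a b) := by
  obtain ⟨v, hv₀, hv₁⟩ := Matrix.exists_eq_of_mulVec_add_mulVec_eq_zero hA hrank hbc
  obtain ⟨hyY, hy₁Y⟩ := hy.eqOn hM (isSolutionOn_mulVec hY hY₁ v) hp
    (by rw [hYp, hv₀]) (by rw [hY₁p, hv₁])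
  have hcoeff : (Y₁ c)⁻¹ *ᵥ y₁ c = v := by
    rw [hy₁Y hc, Matrix.nonsing_inv_mulVec_mulVec hYc]
  rwa [hcoeff]

theorem injective_pi_mulVecLin_comp_inv (hab : a < b) {c : ℝ} (hc : c ∈ Icc a b)
    (hY : HasDerivAt Y (Y₁ c) c) (hYc : IsUnit (Y₁ c)) :
    Function.Injective
      (LinearMap.pi (fun x : Icc a b => (Y x).mulVecLin) ∘ₗ ((Y₁ c)⁻¹).mulVecLin) := by
  have hderiv (w : m → ℝ) :
      HasDerivWithinAt (fun t => Y t *ᵥ ((Y₁ c)⁻¹ *ᵥ w)) w (Icc a b) c := by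
    simpa only [Matrix.mulVec_nonsing_inv_mulVec hYc] using
      (hY.mulVec_const ((Y₁ c)⁻¹ *ᵥ w)).hasDerivWithinAt
  intro w w' h
  exact (uniqueDiffOn_Icc hab c hc).eq_deriv _ (hderiv w)
    ((hderiv w').congr (fun t ht => congrFun h ⟨t, ht⟩) (congrFun h ⟨c, hc⟩))

end MatrixODE

section BVP

variable {n : ℕ} {a b c E : ℝ} {V : ℝ → Matrix (Fin n) (Fin n) ℝ}
  {A₁ A₂ B₁ B₂ : Matrix (Fin n) (Fin n) ℝ} {YL YL₁ YR YR₁ : ℝ → Matrix (Fin n) (Fin n) ℝ}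

theorem IsBVPSolution.isSolutionOn {y y₁ : ℝ → Fin n → ℝ}
    (h : IsBVPSolution n a b E V A₁ A₂ B₁ B₂ y y₁) :
    IsSolutionOn (fun x => V x - E • 1) (Icc a b) y y₁ := fun t ht => ⟨h.1 t, h.2.1 t ht⟩

/-- The left and right solutions with derivative `w` at `c` have the same Cauchy data at `c`,
hence coincide, so the left one also satisfies the boundary condition at `b`. -/
theorem isBVPSolution_of_mulVec_eq (hab : a ≤ b) (hc : c ∈ Icc a b) (hV : Continuous V)
    (hA : A₁ * A₂ᵀ = A₂ * A₁ᵀ) (hB : B₁ * B₂ᵀ = B₂ * B₁ᵀ)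
    (hYL : ∀ x, HasDerivAt YL (YL₁ x) x)
    (hYL₁ : ∀ x, HasDerivAt YL₁ ((V x - E • (1 : Matrix (Fin n) (Fin n) ℝ)) * YL x) x)
    (hYR : ∀ x, HasDerivAt YR (YR₁ x) x)
    (hYR₁ : ∀ x, HasDerivAt YR₁ ((V x - E • (1 : Matrix (Fin n) (Fin n) ℝ)) * YR x) x)
    (hYLa : YL a = A₂ᵀ) (hYL₁a : YL₁ a = -A₁ᵀ) (hYRb : YR b = B₂ᵀ) (hYR₁b : YR₁ b = -B₁ᵀ)
    (hLc : IsUnit (YL₁ c)) (hRc : IsUnit (YR₁ c)) {w : Fin n → ℝ}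
    (hw : (YL c * (YL₁ c)⁻¹) *ᵥ w = (YR c * (YR₁ c)⁻¹) *ᵥ w) :
    IsBVPSolution n a b E V A₁ A₂ B₁ B₂ (fun t => YL t *ᵥ ((YL₁ c)⁻¹ *ᵥ w))
      (fun t => YL₁ t *ᵥ ((YL₁ c)⁻¹ *ᵥ w)) := by
  have hL := isSolutionOn_mulVec (s := Icc a b) (fun t _ => hYL t) (fun t _ => hYL₁ t)
    ((YL₁ c)⁻¹ *ᵥ w)
  have hR := isSolutionOn_mulVec (s := Icc a b) (fun t _ => hYR t) (fun t _ => hYR₁ t)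
    ((YR₁ c)⁻¹ *ᵥ w)
  obtain ⟨hval, hder⟩ := hL.eqOn (hV.sub continuous_const).continuousOn hR hc
    (by simpa only [Matrix.mulVec_mulVec] using hw)
    (by rw [Matrix.mulVec_nonsing_inv_mulVec hLc, Matrix.mulVec_nonsing_inv_mulVec hRc])
  refine ⟨fun t => (hYL t).mulVec_const _, fun t ht => (hL t ht).2, ?_, ?_⟩
  · simp only [hYLa, hYL₁a]
    exact Matrix.mulVec_add_mulVec_eq_zero hA _
  · have hb := right_mem_Icc.2 hab
    simp only [hval hb, hder hb, hYRb, hYR₁b]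
    exact Matrix.mulVec_add_mulVec_eq_zero hB _

end BVP

theorem deriv_at_c_injective_range_ker_general (n : ℕ) (a b c E : ℝ)
    (hab : a < b) (hc : c ∈ Icc a b)
    (V : ℝ → Matrix (Fin n) (Fin n) ℝ)
    (hVcont : Continuous V)
    (A₁ A₂ B₁ B₂ : Matrix (Fin n) (Fin n) ℝ)
    (hA : A₁ * A₂ᵀ = A₂ * A₁ᵀ) (hB : B₁ * B₂ᵀ = B₂ * B₁ᵀ)
    (hArank : ∀ v : Fin n → ℝ, A₁ᵀ.mulVec v = 0 → A₂ᵀ.mulVec v = 0 → v = 0)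
    (hBrank : ∀ v : Fin n → ℝ, B₁ᵀ.mulVec v = 0 → B₂ᵀ.mulVec v = 0 → v = 0)
    (YL YL₁ YR YR₁ : ℝ → Matrix (Fin n) (Fin n) ℝ)
    (hYL : ∀ x, HasDerivAt YL (YL₁ x) x)
    (hYL₁ : ∀ x, HasDerivAt YL₁ ((V x - E • (1 : Matrix (Fin n) (Fin n) ℝ)) * YL x) x)
    (hYR : ∀ x, HasDerivAt YR (YR₁ x) x)
    (hYR₁ : ∀ x, HasDerivAt YR₁ ((V x - E • (1 : Matrix (Fin n) (Fin n) ℝ)) * YR x) x)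
    (hYLa : YL a = A₂ᵀ) (hYL₁a : YL₁ a = -A₁ᵀ)
    (hYRb : YR b = B₂ᵀ) (hYR₁b : YR₁ b = -B₁ᵀ)
    (hLc : IsUnit (YL₁ c)) (hRc : IsUnit (YR₁ c)) :
    -- injectivity of the map (solution y) ↦ y'(c)
    (∀ y y₁ z z₁ : ℝ → Fin n → ℝ,
        IsBVPSolution n a b E V A₁ A₂ B₁ B₂ y y₁ →
        IsBVPSolution n a b E V A₁ A₂ B₁ B₂ z z₁ →
        y₁ c = z₁ c → EqOn y z (Icc a b)) ∧
    -- the range of that map is the kernel of Ψ_L(c) - Ψ_R(c)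
    {w : Fin n → ℝ | ∃ y y₁ : ℝ → Fin n → ℝ,
        IsBVPSolution n a b E V A₁ A₂ B₁ B₂ y y₁ ∧ y₁ c = w} =
      {w : Fin n → ℝ |
        (YL c * (YL₁ c)⁻¹ - YR c * (YR₁ c)⁻¹).mulVec w = 0} ∧
    -- multiplicity of E = dimension of the kernel of Ψ_L(c) - Ψ_R(c)
    Module.rank ℝ
        (Submodule.span ℝ {f : Icc a b → Fin n → ℝ |
          ∃ y y₁ : ℝ → Fin n → ℝ,
            IsBVPSolution n a b E V A₁ A₂ B₁ B₂ y y₁ ∧ f = (Icc a b).restrict y}) =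
      Module.rank ℝ
        (LinearMap.ker (YL c * (YL₁ c)⁻¹ - YR c * (YR₁ c)⁻¹).mulVecLin) := by
  have hM : ContinuousOn (fun x => V x - E • (1 : Matrix (Fin n) (Fin n) ℝ)) (Icc a b) :=
    (hVcont.sub continuous_const).continuousOn
  have repL {y y₁} (hy : IsBVPSolution n a b E V A₁ A₂ B₁ B₂ y y₁) :=
    hy.isSolutionOn.eqOn_mulVec_inv_mulVec hA hArank hM (fun t _ => hYL t) (fun t _ => hYL₁ t)
      (left_mem_Icc.2 hab.le) hYLa hYL₁a hc hLc hy.2.2.1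
  have repR {y y₁} (hy : IsBVPSolution n a b E V A₁ A₂ B₁ B₂ y y₁) :=
    hy.isSolutionOn.eqOn_mulVec_inv_mulVec hB hBrank hM (fun t _ => hYR t) (fun t _ => hYR₁ t)
      (right_mem_Icc.2 hab.le) hYRb hYR₁b hc hRc hy.2.2.2
  have hsol {w} (hw : (YL c * (YL₁ c)⁻¹ - YR c * (YR₁ c)⁻¹) *ᵥ w = 0) :=
    isBVPSolution_of_mulVec_eq hab.le hc hVcont hA hB hYL hYL₁ hYR hYR₁ hYLa hYL₁a hYRb hYR₁b
      hLc hRc (sub_eq_zero.1 (by rwa [← Matrix.sub_mulVec]))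
  have hrange : {w : Fin n → ℝ | ∃ y y₁ : ℝ → Fin n → ℝ,
      IsBVPSolution n a b E V A₁ A₂ B₁ B₂ y y₁ ∧ y₁ c = w} =
      {w | (YL c * (YL₁ c)⁻¹ - YR c * (YR₁ c)⁻¹) *ᵥ w = 0} := by
    ext w
    refine ⟨?_, fun hw => ⟨_, _, hsol hw, Matrix.mulVec_nonsing_inv_mulVec hLc w⟩⟩
    rintro ⟨y, y₁, hy, rfl⟩
    show _ = 0
    rw [Matrix.sub_mulVec, ← Matrix.mulVec_mulVec, ← Matrix.mulVec_mulVec, sub_eq_zero]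
    exact (repL hy hc).symm.trans (repR hy hc)
  refine ⟨fun y y₁ z z₁ hy hz hyz x hx => by rw [repL hy hx, repL hz hx, hyz], hrange, ?_⟩
  set Φ := LinearMap.pi (fun x : Icc a b => (YL x).mulVecLin) ∘ₗ ((YL₁ c)⁻¹).mulVecLin
  have hsols : {f : Icc a b → Fin n → ℝ | ∃ y y₁ : ℝ → Fin n → ℝ,
      IsBVPSolution n a b E V A₁ A₂ B₁ B₂ y y₁ ∧ f = (Icc a b).restrict y} =
      Φ '' LinearMap.ker (YL c * (YL₁ c)⁻¹ - YR c * (YR₁ c)⁻¹).mulVecLin := by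
    ext f
    constructor
    · rintro ⟨y, y₁, hy, rfl⟩
      exact ⟨y₁ c, LinearMap.mem_ker.2 (hrange.subset ⟨y, y₁, hy, rfl⟩),
        funext fun x => (repL hy x.2).symm⟩
    · rintro ⟨w, hw, rfl⟩
      exact ⟨_, _, hsol hw, rfl⟩
  rw [hsols, Submodule.span_image, Submodule.span_eq,
    rank_map_eq (injective_pi_mulVecLin_comp_inv hab hc (hYL c) hLc)]

/-- The map sending a solution `y` of the boundary value problem to `y'(c)`
is injective (solutions agreeing at `c` coincide on `[a,b]`), its range is
exactly the kernel of the matching matrix `Ψ_L(c) - Ψ_R(c)`, and hence the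
dimension of the space of solutions (the multiplicity of `E`) equals the
dimension of the kernel of `Ψ_L(c) - Ψ_R(c)`. -/
theorem deriv_at_c_injective_range_ker (n : ℕ) (hn : 1 ≤ n) (a b c E : ℝ)
    (hab : a < b) (hc : c ∈ Icc a b)
    (V : ℝ → Matrix (Fin n) (Fin n) ℝ)
    (hVcont : Continuous V) (hVsymm : ∀ x, (V x)ᵀ = V x)
    (A₁ A₂ B₁ B₂ : Matrix (Fin n) (Fin n) ℝ)
    (hA : A₁ * A₂ᵀ = A₂ * A₁ᵀ) (hB : B₁ * B₂ᵀ = B₂ * B₁ᵀ)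
    (hArank : ∀ v : Fin n → ℝ, A₁ᵀ.mulVec v = 0 → A₂ᵀ.mulVec v = 0 → v = 0)
    (hBrank : ∀ v : Fin n → ℝ, B₁ᵀ.mulVec v = 0 → B₂ᵀ.mulVec v = 0 → v = 0)
    (YL YL₁ YR YR₁ : ℝ → Matrix (Fin n) (Fin n) ℝ)
    (hYL : ∀ x, HasDerivAt YL (YL₁ x) x)
    (hYL₁ : ∀ x, HasDerivAt YL₁ ((V x - E • (1 : Matrix (Fin n) (Fin n) ℝ)) * YL x) x)
    (hYR : ∀ x, HasDerivAt YR (YR₁ x) x)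
    (hYR₁ : ∀ x, HasDerivAt YR₁ ((V x - E • (1 : Matrix (Fin n) (Fin n) ℝ)) * YR x) x)
    (hYLa : YL a = A₂ᵀ) (hYL₁a : YL₁ a = -A₁ᵀ)
    (hYRb : YR b = B₂ᵀ) (hYR₁b : YR₁ b = -B₁ᵀ)
    (hLc : IsUnit (YL₁ c)) (hRc : IsUnit (YR₁ c)) :
    -- injectivity of the map (solution y) ↦ y'(c)
    (∀ y y₁ z z₁ : ℝ → Fin n → ℝ,
        IsBVPSolution n a b E V A₁ A₂ B₁ B₂ y y₁ →
        IsBVPSolution n a b E V A₁ A₂ B₁ B₂ z z₁ →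
        y₁ c = z₁ c → EqOn y z (Icc a b)) ∧
    -- the range of that map is the kernel of Ψ_L(c) - Ψ_R(c)
    {w : Fin n → ℝ | ∃ y y₁ : ℝ → Fin n → ℝ,
        IsBVPSolution n a b E V A₁ A₂ B₁ B₂ y y₁ ∧ y₁ c = w} =
      {w : Fin n → ℝ |
        (YL c * (YL₁ c)⁻¹ - YR c * (YR₁ c)⁻¹).mulVec w = 0} ∧
    -- multiplicity of E = dimension of the kernel of Ψ_L(c) - Ψ_R(c)
    Module.rank ℝ
        (Submodule.span ℝ {f : Icc a b → Fin n → ℝ |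
          ∃ y y₁ : ℝ → Fin n → ℝ,
            IsBVPSolution n a b E V A₁ A₂ B₁ B₂ y y₁ ∧ f = (Icc a b).restrict y}) =
      Module.rank ℝ
        (LinearMap.ker (YL c * (YL₁ c)⁻¹ - YR c * (YR₁ c)⁻¹).mulVecLin) :=
  deriv_at_c_injective_range_ker_general n a b c E hab hc V hVcont A₁ A₂ B₁ B₂ hA hB hArank hBrank
    YL YL₁ YR YR₁ hYL hYL₁ hYR hYR₁ hYLa hYL₁a hYRb hYR₁b hLc hRc
end

section
/- Let d ∈ ℝ and let θ : ℝ → ℝ be differentiable with θ'(δ) = cos²θ(δ) + d·sin²θ(δ) for all δ and θ(0) = 0. Then for every δ ∈ ℝ one has δ·η₀(−d·δ²)·cos θ(δ) = ξ(−d·δ²)·sin θ(δ). (That is, tan θ(δ) = δ·η₀(−d·δ²)/ξ(−d·δ²) wherever ξ(−d·δ²) ≠ 0: the Prüfer angle of the solution of y'' = −d·y with y(0) = 0, y'(0) = 1 is expressed through the CP functions ξ and η₀.) -/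
/-- The CP function `ξ`. -/
noncomputable def xi (z : ℝ) : ℝ :=
  if z ≤ 0 then Real.cos (Real.sqrt (-z)) else Real.cosh (Real.sqrt z)

/-- The CP function `η₀`. -/
noncomputable def eta0 (z : ℝ) : ℝ :=
  if z < 0 then Real.sin (Real.sqrt (-z)) / Real.sqrt (-z)
  else if z = 0 then 1
  else Real.sinh (Real.sqrt z) / Real.sqrt z

/-!
Compare the Prüfer angle `θ` with a solution `(u, v) = (y, y')` of `y'' = -d y`: by
`sin² + cos² = 1` the defect `F = u cos θ - v sin θ` satisfies the linear equation
`F' = (d - 1) sin θ cos θ · F`, whose coefficient is bounded, so by uniqueness of ODE solutions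
`F` vanishes identically once it vanishes at one point. For `y(0) = 0`, `y'(0) = 1` the solution
is `y(δ) = δ η₀(-d δ²)`, `y'(δ) = ξ(-d δ²)`, which is read off from the closed forms in `sin`, `cos`
(`d > 0`) and `sinh`, `cosh` (`d < 0`).
-/

open Real Set
open scoped NNReal

theorem eq_zero_of_hasDerivAt_mul_self {F c : ℝ → ℝ} {K : ℝ≥0} (hc : ∀ t, ‖c t‖₊ ≤ K)
    (hF : ∀ t, HasDerivAt F (c t * F t) t) {t₀ : ℝ} (h₀ : F t₀ = 0) : F = 0 :=
  ODE_solution_unique_univ (v := fun t x => c t * x) (s := fun _ => univ)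
    (fun t => ((lipschitzWith_smul (c t)).weaken (hc t)).lipschitzOnWith)
    (fun t => ⟨hF t, mem_univ _⟩)
    (fun t => ⟨by simp, mem_univ _⟩) h₀

section Prufer

variable {d : ℝ} {θ u v : ℝ → ℝ}

theorem hasDerivAt_prufer_defect {t : ℝ}
    (hθ : HasDerivAt θ (cos (θ t) ^ 2 + d * sin (θ t) ^ 2) t)
    (hu : HasDerivAt u (v t) t) (hv : HasDerivAt v (-d * u t) t) :
    HasDerivAt (fun t => u t * cos (θ t) - v t * sin (θ t))
      ((d - 1) * (sin (θ t) * cos (θ t)) * (u t * cos (θ t) - v t * sin (θ t))) t := by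
  refine ((hu.mul hθ.cos).sub (hv.mul hθ.sin)).congr_deriv ?_
  linear_combination (-(d * u t * sin (θ t) + v t * cos (θ t))) * sin_sq_add_cos_sq (θ t)

theorem prufer_relation_of_hasDerivAt
    (hθ : ∀ t, HasDerivAt θ (cos (θ t) ^ 2 + d * sin (θ t) ^ 2) t)
    (hu : ∀ t, HasDerivAt u (v t) t) (hv : ∀ t, HasDerivAt v (-d * u t) t) {t₀ : ℝ}
    (h₀ : u t₀ * cos (θ t₀) = v t₀ * sin (θ t₀)) (t : ℝ) :
    u t * cos (θ t) = v t * sin (θ t) := by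
  have hc : ∀ t, ‖(d - 1) * (sin (θ t) * cos (θ t))‖₊ ≤ ‖d - 1‖₊ := fun t => by
    rw [nnnorm_mul]
    refine mul_le_of_le_one_right' ?_
    rw [← NNReal.coe_le_coe, coe_nnnorm, norm_mul]
    exact mul_le_one₀ (abs_sin_le_one _) (norm_nonneg _) (abs_cos_le_one _)
  have := eq_zero_of_hasDerivAt_mul_self hc
    (fun t => hasDerivAt_prufer_defect (hθ t) (hu t) (hv t)) (sub_eq_zero.mpr h₀)
  exact sub_eq_zero.mp (congrFun this t)

end Prufer

theorem div_abs_eq_div_of_odd {f : ℝ → ℝ} (hf : ∀ x, f (-x) = -f x) (x : ℝ) :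
    f |x| / |x| = f x / x := by
  rcases abs_choice x with h | h <;> rw [h]
  rw [hf, neg_div_neg_eq]

noncomputable def cpSin (d t : ℝ) : ℝ := t * eta0 (-d * t ^ 2)

noncomputable def cpCos (d t : ℝ) : ℝ := xi (-d * t ^ 2)

section ClosedForms

variable {d : ℝ}

theorem mul_sq_eq_sq_sqrt_mul (hd : 0 ≤ d) (t : ℝ) : d * t ^ 2 = (√d * t) ^ 2 := by
  rw [mul_pow, sq_sqrt hd]

theorem cpCos_of_pos (hd : 0 < d) : cpCos d = fun t => cos (√d * t) := by
  funext t
  have hz : -d * t ^ 2 ≤ 0 := by rw [neg_mul, neg_nonpos]; positivity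
  rw [cpCos, xi, if_pos hz, neg_mul, neg_neg, mul_sq_eq_sq_sqrt_mul hd.le, sqrt_sq_eq_abs,
    cos_abs]

theorem cpSin_of_pos (hd : 0 < d) : cpSin d = fun t => sin (√d * t) / √d := by
  funext t
  rcases eq_or_ne t 0 with rfl | ht
  · simp [cpSin]
  have hz : -d * t ^ 2 < 0 := by rw [neg_mul, neg_lt_zero]; positivity
  have hk : 0 < √d := sqrt_pos.mpr hd
  rw [cpSin, eta0, if_pos hz, neg_mul, neg_neg, mul_sq_eq_sq_sqrt_mul hd.le, sqrt_sq_eq_abs,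
    div_abs_eq_div_of_odd sin_neg]
  field_simp

theorem cpCos_of_neg (hd : d < 0) : cpCos d = fun t => cosh (√(-d) * t) := by
  funext t
  rcases eq_or_ne t 0 with rfl | ht
  · simp [cpCos, xi]
  have hz : 0 < -d * t ^ 2 := mul_pos (neg_pos.mpr hd) (by positivity)
  rw [cpCos, xi, if_neg hz.not_ge, mul_sq_eq_sq_sqrt_mul (neg_nonneg.mpr hd.le),
    sqrt_sq_eq_abs, cosh_abs]

theorem cpSin_of_neg (hd : d < 0) : cpSin d = fun t => sinh (√(-d) * t) / √(-d) := by
  funext t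
  rcases eq_or_ne t 0 with rfl | ht
  · simp [cpSin]
  have hz : 0 < -d * t ^ 2 := mul_pos (neg_pos.mpr hd) (by positivity)
  have hk : 0 < √(-d) := sqrt_pos.mpr (neg_pos.mpr hd)
  rw [cpSin, eta0, if_neg hz.not_gt, if_neg hz.ne', mul_sq_eq_sq_sqrt_mul (neg_nonneg.mpr hd.le),
    sqrt_sq_eq_abs, div_abs_eq_div_of_odd sinh_neg]
  field_simp

theorem cpSin_zero_left : cpSin 0 = id := by
  funext t
  simp [cpSin, eta0]

theorem cpCos_zero_left : cpCos 0 = 1 := by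
  funext t
  simp [cpCos, xi]

end ClosedForms

theorem hasDerivAt_cpSin (d t : ℝ) : HasDerivAt (cpSin d) (cpCos d t) t := by
  rcases lt_trichotomy d 0 with hd | rfl | hd
  · have hk : √(-d) ≠ 0 := (sqrt_pos.mpr (neg_pos.mpr hd)).ne'
    rw [cpSin_of_neg hd, cpCos_of_neg hd]
    refine (((hasDerivAt_id' t).const_mul _).sinh.div_const _).congr_deriv ?_
    field_simp
  · rw [cpSin_zero_left, cpCos_zero_left]
    exact hasDerivAt_id t
  · have hk : √d ≠ 0 := (sqrt_pos.mpr hd).ne'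
    rw [cpSin_of_pos hd, cpCos_of_pos hd]
    refine (((hasDerivAt_id' t).const_mul _).sin.div_const _).congr_deriv ?_
    field_simp

theorem hasDerivAt_cpCos (d t : ℝ) : HasDerivAt (cpCos d) (-d * cpSin d t) t := by
  rcases lt_trichotomy d 0 with hd | rfl | hd
  · have hk : √(-d) ≠ 0 := (sqrt_pos.mpr (neg_pos.mpr hd)).ne'
    rw [cpSin_of_neg hd, cpCos_of_neg hd]
    refine ((hasDerivAt_id' t).const_mul _).cosh.congr_deriv ?_
    field_simp
    rw [sq_sqrt (neg_nonneg.mpr hd.le)]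
    ring
  · rw [cpSin_zero_left, cpCos_zero_left]
    exact (hasDerivAt_const t (1 : ℝ)).congr_deriv (by simp)
  · have hk : √d ≠ 0 := (sqrt_pos.mpr hd).ne'
    rw [cpSin_of_pos hd, cpCos_of_pos hd]
    refine ((hasDerivAt_id' t).const_mul _).cos.congr_deriv ?_
    field_simp
    rw [sq_sqrt hd.le]
    ring

/-- The Prüfer angle `θ` of the solution of `y'' = -d·y`, `y(0) = 0`,
`y'(0) = 1` (i.e. `θ' = cos²θ + d·sin²θ`, `θ(0) = 0`) satisfies
`tan θ(δ) = δ·η₀(-d·δ²)/ξ(-d·δ²)`, written without denominators. -/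
theorem prufer_angle_cp (d : ℝ) (θ : ℝ → ℝ)
    (hθ : Differentiable ℝ θ)
    (hode : ∀ δ, deriv θ δ =
      Real.cos (θ δ) ^ 2 + d * Real.sin (θ δ) ^ 2)
    (h0 : θ 0 = 0) :
    ∀ δ : ℝ, δ * eta0 (-d * δ ^ 2) * Real.cos (θ δ)
      = xi (-d * δ ^ 2) * Real.sin (θ δ) :=
  prufer_relation_of_hasDerivAt (fun t => hode t ▸ (hθ t).hasDerivAt)
    (hasDerivAt_cpSin d) (hasDerivAt_cpCos d) (t₀ := 0) (by simp [h0])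
end
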